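/- Let A be a real symmetric positive definite N×N matrix. Then the Fourier transform of x ↦ e^{-xᵀAx} is ξ ↦ (π^N / det A)^{1/2} e^{-π² ξᵀ A^{-1} ξ}, where the Fourier transform is defined by F(f)(ξ) = ∫_{ℝᴺ} e^{-2πi xᵀξ} f(x) dx. -/

import Mathlib

/-!
Write `A = Bᵀ B` with `B` invertible. The substitution `y = B x` turns the integral into
`|det B|⁻¹` times the Fourier transform of the standard Gaussian `e^{-|y|²}` at `η = (Bᵀ)⁻¹ ξ`,
which factors into one-dimensional Gaussian integrals and equals `π^{N/2} e^{-π² |η|²}`.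
Finally `det A = (det B)²` and `|η|² = ξ ⬝ A⁻¹ ξ`.
-/

open Matrix MeasureTheory

theorem MeasureTheory.Measure.integral_comp_linearEquiv {E F : Type*} [NormedAddCommGroup E]
    [NormedSpace ℝ E] [FiniteDimensional ℝ E] [MeasurableSpace E] [BorelSpace E]
    [NormedAddCommGroup F] [NormedSpace ℝ F] (μ : Measure E) [μ.IsAddHaarMeasure]
    (L : E ≃ₗ[ℝ] E) (f : E → F) :
    ∫ x, f (L x) ∂μ = |LinearMap.det (L : E →ₗ[ℝ] E)|⁻¹ • ∫ y, f y ∂μ := by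
  let e : E ≃ᵐ E := L.toContinuousLinearEquiv.toHomeomorph.toMeasurableEquiv
  have hmap : μ.map e = ENNReal.ofReal |(LinearMap.det (L : E →ₗ[ℝ] E))⁻¹| • μ :=
    Measure.map_linearMap_addHaar_eq_smul_addHaar μ (LinearEquiv.isUnit_det' L).ne_zero
  rw [← abs_inv, ← ENNReal.toReal_ofReal (abs_nonneg _), ← integral_smul_measure, ← hmap,
    integral_map_equiv e f]
  rfl

theorem Matrix.integral_comp_mulVec {ι F : Type*} [Fintype ι] [DecidableEq ι]
    [NormedAddCommGroup F] [NormedSpace ℝ F] {B : Matrix ι ι ℝ} (hB : IsUnit B.det)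
    (f : (ι → ℝ) → F) :
    ∫ x, f (B *ᵥ x) = |B.det|⁻¹ • ∫ y, f y := by
  let _ := B.invertibleOfIsUnitDet hB
  convert Measure.integral_comp_linearEquiv volume (B.toLinearEquiv' ‹_›) f using 3
  · rfl
  · rw [toLinearEquiv'_apply, LinearMap.det_toLin']

theorem Matrix.dotProduct_transpose_mul_mulVec {ι : Type*} [Fintype ι] (B : Matrix ι ι ℝ)
    (x : ι → ℝ) : x ⬝ᵥ (Bᵀ * B) *ᵥ x = B *ᵥ x ⬝ᵥ B *ᵥ x := by
  rw [← mulVec_mulVec, dotProduct_mulVec, vecMul_transpose]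

theorem Matrix.PosDef.exists_eq_transpose_mul_self {ι : Type*} [Fintype ι] [DecidableEq ι]
    {A : Matrix ι ι ℝ} (hA : A.PosDef) : ∃ B : Matrix ι ι ℝ, IsUnit B.det ∧ A = Bᵀ * B := by
  open MatrixOrder in
  obtain ⟨B, rfl⟩ := CStarAlgebra.nonneg_iff_eq_star_mul_self.mp hA.posSemidef.nonneg
  refine ⟨B, isUnit_iff_ne_zero.mpr fun h => hA.det_pos.ne' ?_, rfl⟩
  simp [h]

theorem fourier_gaussian_dotProduct {ι : Type*} [Fintype ι] (η : ι → ℝ) :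
    ∫ y : ι → ℝ, Complex.exp (-2 * Real.pi * Complex.I * ((y ⬝ᵥ η : ℝ) : ℂ)) *
        ((Real.exp (-(y ⬝ᵥ y)) : ℝ) : ℂ)
      = ((Real.sqrt (Real.pi ^ Fintype.card ι) : ℝ) : ℂ) *
          ((Real.exp (-(Real.pi ^ 2) * (η ⬝ᵥ η)) : ℝ) : ℂ) := by
  have h := GaussianFourier.integral_cexp_neg_mul_sum_add (b := 1) (by simp)
    (fun i => -2 * Real.pi * Complex.I * η i)
  convert h using 1
  · congr 1 with y
    simp only [dotProduct, Complex.ofReal_exp, ← Complex.exp_add]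
    push_cast
    congr 1
    simp only [Finset.mul_sum, ← Finset.sum_neg_distrib, ← Finset.sum_add_distrib]
    exact Finset.sum_congr rfl fun i _ => by ring
  · congr 1
    · rw [div_one, Real.sqrt_eq_rpow, ← Real.rpow_natCast, ← Real.rpow_mul Real.pi_nonneg,
        Complex.ofReal_cpow Real.pi_nonneg]
      push_cast
      ring_nf
    · simp only [dotProduct, Complex.ofReal_exp]
      push_cast
      congr 1
      simp only [Finset.mul_sum, Finset.sum_div]
      exact Finset.sum_congr rfl fun i _ => by ring_nf; simp

theorem fourier_gaussian_transpose_mul_self {ι : Type*} [Fintype ι] [DecidableEq ι]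
    {B : Matrix ι ι ℝ} (hB : IsUnit B.det) (ξ : ι → ℝ) :
    ∫ x : ι → ℝ, Complex.exp (-2 * Real.pi * Complex.I * ((x ⬝ᵥ ξ : ℝ) : ℂ)) *
        ((Real.exp (-(x ⬝ᵥ (Bᵀ * B) *ᵥ x)) : ℝ) : ℂ)
      = ((Real.sqrt (Real.pi ^ Fintype.card ι / (Bᵀ * B).det) : ℝ) : ℂ) *
          ((Real.exp (-(Real.pi ^ 2) * (ξ ⬝ᵥ (Bᵀ * B)⁻¹ *ᵥ ξ)) : ℝ) : ℂ) := by
  have hBT : IsUnit Bᵀ.det := by rwa [det_transpose]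
  obtain ⟨η, rfl⟩ : ∃ η, Bᵀ *ᵥ η = ξ :=
    ⟨(Bᵀ)⁻¹ *ᵥ ξ, by rw [mulVec_mulVec, mul_nonsing_inv _ hBT, one_mulVec]⟩
  have hlin (x : ι → ℝ) : x ⬝ᵥ Bᵀ *ᵥ η = B *ᵥ x ⬝ᵥ η := by
    rw [dotProduct_mulVec, vecMul_transpose, dotProduct_comm]
  have hquad : Bᵀ *ᵥ η ⬝ᵥ (Bᵀ * B)⁻¹ *ᵥ Bᵀ *ᵥ η = η ⬝ᵥ η := by
    rw [Matrix.mul_inv_rev, ← mulVec_mulVec, mulVec_mulVec _ (Bᵀ)⁻¹, nonsing_inv_mul _ hBT,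
      one_mulVec, dotProduct_comm, dotProduct_mulVec, vecMul_transpose, mulVec_mulVec,
      mul_nonsing_inv _ hB, one_mulVec]
  have hsqrt : Real.sqrt (Real.pi ^ Fintype.card ι / (Bᵀ * B).det)
      = |B.det|⁻¹ * Real.sqrt (Real.pi ^ Fintype.card ι) := by
    rw [det_mul, det_transpose, Real.sqrt_div' _ (mul_self_nonneg _), Real.sqrt_mul_self_eq_abs,
      div_eq_inv_mul]
  simp_rw [dotProduct_transpose_mul_mulVec, hlin]
  rw [integral_comp_mulVec hB (fun y => Complex.exp (-2 * Real.pi * Complex.I * ((y ⬝ᵥ η : ℝ) : ℂ)) *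
      ((Real.exp (-(y ⬝ᵥ y)) : ℝ) : ℂ)), fourier_gaussian_dotProduct, hsqrt, hquad,
    Complex.real_smul]
  push_cast
  ring

theorem stmt4 {N : ℕ} (A : Matrix (Fin N) (Fin N) ℝ) (hA : A.PosDef)
    (ξ : Fin N → ℝ) :
    ∫ x : Fin N → ℝ,
        Complex.exp (-2 * Real.pi * Complex.I * ((x ⬝ᵥ ξ : ℝ) : ℂ)) *
          ((Real.exp (-(x ⬝ᵥ A.mulVec x)) : ℝ) : ℂ)
      = ((Real.sqrt (Real.pi ^ N / A.det) : ℝ) : ℂ) *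
          ((Real.exp (-(Real.pi ^ 2) * (ξ ⬝ᵥ A⁻¹.mulVec ξ)) : ℝ) : ℂ) := by
  obtain ⟨B, hB, rfl⟩ := hA.exists_eq_transpose_mul_self
  simpa only [Fintype.card_fin] using fourier_gaussian_transpose_mul_self hB ξ
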